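/- Let A ∈ ℝ^{q×n}, b ∈ ℝ^q, c : ℝⁿ → ℝᵖ twice continuously differentiable, f : ℝⁿ → ℝ continuously differentiable. Let εₖ > 0 with εₖ → 0, and for each k let (xₖ, yₖ, z^I_ₖ, λₖ) ∈ ℝⁿ × (ℝ^q × ℝᵖ) × ℝᵖ × ℝⁿ satisfy: G(xₖ, yₖ, z^I_ₖ) = 0; ψ_{εₖ}((y^I_ₖ)ᵢ, (z^I_ₖ)ᵢ) = 0 for all i; and ∇f(xₖ) + [Σ_{j=1}^p (y^I_ₖ)_j ∇²c_j(xₖ) − AᵀA − Σ_{i=1}^p (1 − (z^I_ₖ)ᵢ/√((y^I_ₖ)ᵢ² + (z^I_ₖ)ᵢ² + 2εₖ²)) ∇c_i(xₖ)∇c_i(xₖ)ᵀ] λₖ = 0. Suppose (xₖ, yₖ, z^I_ₖ, λₖ) → (x*, y*, z^I*, λ*). Then, with β = {i : (y^I*)ᵢ = 0 = (z^I*)ᵢ} and γ = {i : (y^I*)ᵢ > 0 = (z^I*)ᵢ}, there exist reals ηᵢ ∈ [0,1] for i ∈ β such that ∇f(x*) + [Σ_{j=1}^p (y^I*)_j ∇²c_j(x*)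 − AᵀA − Σ_{i∈γ} ∇c_i(x*)∇c_i(x*)ᵀ − Σ_{i∈β} ηᵢ ∇c_i(x*)∇c_i(x*)ᵀ] λ* = 0, i.e., (x*, λ*) is an L-stationary pair. -/

import Mathlib

/-!
The smoothed Fischer–Burmeister equation `y + z = √(y² + z² + 2ε²)` is equivalent to
`y, z > 0, y z = ε²`, so every weight `1 - zᵢ/√(yᵢ² + zᵢ² + 2ε²)` of the smoothed stationarity
condition lies in `[0, 1]`. By compactness a subsequence of the weight vectors converges to some
`η ∈ [0, 1]ᵖ`, and passing to the limit in the stationarity condition gives the limit equation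
with weights `η`. In the limit `y*ᵢ z*ᵢ = 0`: where `y*ᵢ > 0 = z*ᵢ` the weights tend to `1`,
where `z*ᵢ > 0` they tend to `0`, so only the biactive indices `β` keep a free weight.
-/

open Filter Topology Matrix

section Derivatives

variable {n m : ℕ} {N : WithTop ℕ∞}

lemma contDiff_of_fderiv_eq_dotProduct {f : (Fin n → ℝ) → ℝ} {g : (Fin n → ℝ) → Fin n → ℝ}
    (hf : ContDiff ℝ (N + 1) f) (hg : ∀ x v, fderiv ℝ f x v = g x ⬝ᵥ v) : ContDiff ℝ N g := by
  have hg_eq : g = fun x j => fderiv ℝ f x (Pi.single j 1) := by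
    funext x j
    simp [hg, dotProduct_single]
  rw [hg_eq, contDiff_pi]
  exact fun j => (hf.fderiv_right le_rfl).clm_apply contDiff_const

lemma contDiff_row_of_fderiv_eq_mulVec {F : (Fin n → ℝ) → Fin m → ℝ}
    {J : (Fin n → ℝ) → Matrix (Fin m) (Fin n) ℝ} (hF : ContDiff ℝ (N + 1) F)
    (hJ : ∀ x v, fderiv ℝ F x v = J x *ᵥ v) (i : Fin m) : ContDiff ℝ N fun x => J x i := by
  have hJ_eq : (fun x => J x i) = fun x j => fderiv ℝ F x (Pi.single j 1) i := by
    funext x j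
    simp [hJ, mulVec_single]
  rw [hJ_eq, contDiff_pi]
  exact fun j => (contDiff_apply ℝ ℝ i).comp ((hF.fderiv_right le_rfl).clm_apply contDiff_const)

lemma continuous_of_fderiv_eq_mulVec {F : (Fin n → ℝ) → Fin m → ℝ}
    {J : (Fin n → ℝ) → Matrix (Fin m) (Fin n) ℝ} (hF : ContDiff ℝ 1 F)
    (hJ : ∀ x v, fderiv ℝ F x v = J x *ᵥ v) : Continuous J :=
  continuous_pi fun i =>
    (contDiff_row_of_fderiv_eq_mulVec (N := 0) (by simpa using hF) hJ i).continuous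

end Derivatives

section SmoothedFischerBurmeister

/-- The weight of `∇cᵢ ∇cᵢᵀ` in the stationarity condition of `P_ε`, at `(yᵢ, zᵢ) = (a, b)`. -/
noncomputable def fbWeight (a b ε : ℝ) : ℝ := 1 - b / √(a ^ 2 + b ^ 2 + 2 * ε ^ 2)

variable {a b ε : ℝ}

lemma mul_eq_sq_of_add_eq_sqrt (h : a + b = √(a ^ 2 + b ^ 2 + 2 * ε ^ 2)) : a * b = ε ^ 2 := by
  have hsq : (a + b) ^ 2 = a ^ 2 + b ^ 2 + 2 * ε ^ 2 := by
    rw [h, Real.sq_sqrt (by positivity)]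
  linear_combination hsq / 2

lemma pos_and_pos_of_add_eq_sqrt (hε : ε ≠ 0) (h : a + b = √(a ^ 2 + b ^ 2 + 2 * ε ^ 2)) :
    0 < a ∧ 0 < b := by
  have hab : 0 < a * b := by rw [mul_eq_sq_of_add_eq_sqrt h]; positivity
  have hsum : 0 ≤ a + b := h ▸ Real.sqrt_nonneg _
  rcases pos_and_pos_or_neg_and_neg_of_mul_pos hab with hpos | ⟨ha, hb⟩
  · exact hpos
  · linarith

lemma fbWeight_mem_Icc (hε : ε ≠ 0) (h : a + b = √(a ^ 2 + b ^ 2 + 2 * ε ^ 2)) :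
    fbWeight a b ε ∈ Set.Icc 0 1 := by
  obtain ⟨ha, hb⟩ := pos_and_pos_of_add_eq_sqrt hε h
  have hle : b / √(a ^ 2 + b ^ 2 + 2 * ε ^ 2) ≤ 1 := by
    rw [← h, div_le_one (by linarith)]
    linarith
  have hnonneg : 0 ≤ b / √(a ^ 2 + b ^ 2 + 2 * ε ^ 2) := by positivity
  constructor <;> unfold fbWeight <;> linarith

lemma fbWeight_zero_right (a : ℝ) : fbWeight a 0 0 = 1 := by
  simp [fbWeight]

lemma fbWeight_zero_left (hb : 0 < b) : fbWeight 0 b 0 = 0 := by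
  simp [fbWeight, Real.sqrt_sq hb.le, hb.ne']

lemma tendsto_fbWeight {ι : Type*} {L : Filter ι} {a' b' ε' : ι → ℝ}
    (ha : Tendsto a' L (𝓝 a)) (hb : Tendsto b' L (𝓝 b)) (hε : Tendsto ε' L (𝓝 0))
    (hab : a ≠ 0 ∨ b ≠ 0) :
    Tendsto (fun k => fbWeight (a' k) (b' k) (ε' k)) L (𝓝 (fbWeight a b 0)) := by
  have hpos : 0 < a ^ 2 + b ^ 2 + 2 * 0 ^ 2 := by
    rcases hab with h | h <;> positivity
  have hroot := ((ha.pow 2).add (hb.pow 2)).add ((hε.pow 2).const_mul 2) |>.sqrt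
  exact tendsto_const_nhds.sub (hb.div hroot (Real.sqrt_pos.mpr hpos).ne')

/-- In the limit `ε → 0` the smoothed Fischer–Burmeister equation becomes complementarity. -/
lemma complementarity_of_tendsto {ι : Type*} {L : Filter ι} [L.NeBot] {a' b' ε' : ι → ℝ}
    (hFB : ∀ k, a' k + b' k = √(a' k ^ 2 + b' k ^ 2 + 2 * ε' k ^ 2)) (hε' : ∀ k, ε' k ≠ 0)
    (ha : Tendsto a' L (𝓝 a)) (hb : Tendsto b' L (𝓝 b)) (hε : Tendsto ε' L (𝓝 0)) :
    0 ≤ a ∧ 0 ≤ b ∧ a * b = 0 := by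
  refine ⟨ge_of_tendsto' ha fun k => (pos_and_pos_of_add_eq_sqrt (hε' k) (hFB k)).1.le,
    ge_of_tendsto' hb fun k => (pos_and_pos_of_add_eq_sqrt (hε' k) (hFB k)).2.le, ?_⟩
  have hprod : Tendsto (fun k => a' k * b' k) L (𝓝 (0 ^ 2)) := by
    simpa only [mul_eq_sq_of_add_eq_sqrt (hFB _)] using hε.pow 2
  simpa using tendsto_nhds_unique (ha.mul hb) hprod

end SmoothedFischerBurmeister

lemma complementary_cases {a b : ℝ} (ha : 0 ≤ a) (hb : 0 ≤ b) (hab : a * b = 0) :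
    (a = 0 ∧ b = 0) ∨ (0 < a ∧ b = 0) ∨ (a = 0 ∧ 0 < b) := by
  rcases ha.eq_or_lt with rfl | ha <;> rcases hb.eq_or_lt with rfl | hb <;> simp_all [ne_of_gt]

lemma Finset.sum_smul_eq_sum_add_sum_smul {ι R M : Type*} [Fintype ι] [DecidableEq ι] [Semiring R]
    [AddCommMonoid M] [Module R M] {s t : Finset ι} (hst : Disjoint s t) {η : ι → R}
    (hs : ∀ i ∈ s, η i = 1) (hout : ∀ i, i ∉ s → i ∉ t → η i = 0) (v : ι → M) :
    ∑ i, η i • v i = ∑ i ∈ s, v i + ∑ i ∈ t, η i • v i := by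
  rw [← Finset.sum_subset (Finset.subset_univ (s ∪ t)) fun i _ hi => by
      rw [Finset.mem_union, not_or] at hi
      rw [hout i hi.1 hi.2, zero_smul],
    Finset.sum_union hst]
  congr 1
  exact Finset.sum_congr rfl fun i hi => by rw [hs i hi, one_smul]

section Stationarity

variable {n q p : ℕ}

noncomputable def stationarityResidual (gf : (Fin n → ℝ) → Fin n → ℝ)
    (Hc : Fin p → (Fin n → ℝ) → Matrix (Fin n) (Fin n) ℝ)
    (Jc : (Fin n → ℝ) → Matrix (Fin p) (Fin n) ℝ) (A : Matrix (Fin q) (Fin n) ℝ)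
    (x : Fin n → ℝ) (y w : Fin p → ℝ) (l : Fin n → ℝ) : Fin n → ℝ :=
  gf x + ((∑ j, y j • Hc j x) - Aᵀ * A - ∑ i, w i • vecMulVec (Jc x i) (Jc x i)) *ᵥ l

lemma tendsto_stationarityResidual {gf : (Fin n → ℝ) → Fin n → ℝ}
    {Hc : Fin p → (Fin n → ℝ) → Matrix (Fin n) (Fin n) ℝ}
    {Jc : (Fin n → ℝ) → Matrix (Fin p) (Fin n) ℝ} (A : Matrix (Fin q) (Fin n) ℝ)
    (hgf : Continuous gf) (hHc : ∀ j, Continuous (Hc j)) (hJc : Continuous Jc)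
    {ι : Type*} {L : Filter ι} {xk : ι → Fin n → ℝ} {yk wk : ι → Fin p → ℝ}
    {lk : ι → Fin n → ℝ} {x : Fin n → ℝ} {y w : Fin p → ℝ} {l : Fin n → ℝ}
    (hx : Tendsto xk L (𝓝 x)) (hy : Tendsto yk L (𝓝 y)) (hw : Tendsto wk L (𝓝 w))
    (hl : Tendsto lk L (𝓝 l)) :
    Tendsto (fun k => stationarityResidual gf Hc Jc A (xk k) (yk k) (wk k) (lk k)) L
      (𝓝 (stationarityResidual gf Hc Jc A x y w l)) := by
  have hcont : Continuous fun v : (Fin n → ℝ) × (Fin p → ℝ) × (Fin p → ℝ) × (Fin n → ℝ) =>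
      stationarityResidual gf Hc Jc A v.1 v.2.1 v.2.2.1 v.2.2.2 := by
    unfold stationarityResidual
    fun_prop
  exact (hcont.tendsto _).comp (hx.prodMk_nhds (hy.prodMk_nhds (hw.prodMk_nhds hl)))

end Stationarity

theorem smoothing_method_converges_to_L_stationary_general
    {n q p : ℕ} (A : Matrix (Fin q) (Fin n) ℝ)
    (c : (Fin n → ℝ) → (Fin p → ℝ)) (hc : ContDiff ℝ 2 c)
    (f : (Fin n → ℝ) → ℝ) (hf : ContDiff ℝ 1 f)
    -- `gf x` is the gradient of `f` at `x`
    (gf : (Fin n → ℝ) → (Fin n → ℝ))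
    (hgf : ∀ x v, fderiv ℝ f x v = gf x ⬝ᵥ v)
    -- `Jc x` is the Jacobian of `c` at `x` (row `i` is the gradient of `c_i`)
    (Jc : (Fin n → ℝ) → Matrix (Fin p) (Fin n) ℝ)
    (hJc : ∀ x v, fderiv ℝ c x v = Jc x *ᵥ v)
    -- `Hc j x` is the Hessian of `c_j` at `x`
    (Hc : Fin p → (Fin n → ℝ) → Matrix (Fin n) (Fin n) ℝ)
    (hHc : ∀ j x u, fderiv ℝ (fun y => Jc y j) x u = Hc j x *ᵥ u)
    (εk : ℕ → ℝ) (hεk : ∀ k, 0 < εk k) (hεk0 : Tendsto εk atTop (𝓝 0))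
    (xk : ℕ → (Fin n → ℝ)) (yIk : ℕ → (Fin p → ℝ))
    (zIk : ℕ → (Fin p → ℝ)) (lk : ℕ → (Fin n → ℝ))
    -- smoothed Fischer–Burmeister equations
    (hFB : ∀ k i, yIk k i + zIk k i -
        Real.sqrt (yIk k i ^ 2 + zIk k i ^ 2 + 2 * εk k ^ 2) = 0)
    -- stationarity of the smoothed problem with multiplier `lk k`
    (hstat : ∀ k, gf (xk k) + ((∑ j : Fin p, yIk k j • Hc j (xk k)) - Aᵀ * A -
        ∑ i : Fin p, (1 - zIk k i /
            Real.sqrt (yIk k i ^ 2 + zIk k i ^ 2 + 2 * εk k ^ 2)) •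
          vecMulVec (Jc (xk k) i) (Jc (xk k) i)) *ᵥ lk k = 0)
    -- convergence of the whole sequence
    (x : Fin n → ℝ) (yI : Fin p → ℝ) (zI : Fin p → ℝ) (l : Fin n → ℝ)
    (hx : Tendsto xk atTop (𝓝 x))
    (hyI : Tendsto yIk atTop (𝓝 yI)) (hzI : Tendsto zIk atTop (𝓝 zI))
    (hl : Tendsto lk atTop (𝓝 l))
    (β γ : Finset (Fin p))
    (hβ : β = Finset.univ.filter (fun i => yI i = 0 ∧ zI i = 0))
    (hγ : γ = Finset.univ.filter (fun i => 0 < yI i ∧ zI i = 0)) :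
    ∃ η : Fin p → ℝ, (∀ i ∈ β, η i ∈ Set.Icc (0 : ℝ) 1) ∧
      gf x + ((∑ j : Fin p, yI j • Hc j x) - Aᵀ * A -
          (∑ i ∈ γ, vecMulVec (Jc x i) (Jc x i)) -
          ∑ i ∈ β, η i • vecMulVec (Jc x i) (Jc x i)) *ᵥ l = 0 := by
  have hgf_cont : Continuous gf :=
    (contDiff_of_fderiv_eq_dotProduct (N := 0) (by simpa using hf) hgf).continuous
  have hJc_cont : Continuous Jc := continuous_of_fderiv_eq_mulVec (hc.of_le one_le_two) hJc
  have hHc_cont : ∀ j, Continuous (Hc j) := fun j =>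
    continuous_of_fderiv_eq_mulVec (contDiff_row_of_fderiv_eq_mulVec (N := 1) hc hJc j) (hHc j)
  have hFB' : ∀ k i, yIk k i + zIk k i = √(yIk k i ^ 2 + zIk k i ^ 2 + 2 * εk k ^ 2) :=
    fun k i => sub_eq_zero.mp (hFB k i)
  have hεk' : ∀ k, εk k ≠ 0 := fun k => (hεk k).ne'
  have hyIi := tendsto_pi_nhds.mp hyI
  have hzIi := tendsto_pi_nhds.mp hzI
  obtain ⟨η, hη, φ, hφ, hwφ⟩ := isCompact_Icc.tendsto_subseq (s := Set.Icc (0 : Fin p → ℝ) 1)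
    (x := fun k i => fbWeight (yIk k i) (zIk k i) (εk k)) fun k =>
      ⟨fun i => (fbWeight_mem_Icc (hεk' k) (hFB' k i)).1,
        fun i => (fbWeight_mem_Icc (hεk' k) (hFB' k i)).2⟩
  have hη_lim : ∀ i, (yI i ≠ 0 ∨ zI i ≠ 0) → η i = fbWeight (yI i) (zI i) 0 := fun i hi =>
    tendsto_nhds_unique (tendsto_pi_nhds.mp hwφ i)
      ((tendsto_fbWeight (hyIi i) (hzIi i) hεk0 hi).comp hφ.tendsto_atTop)
  have hη_γ : ∀ i ∈ γ, η i = 1 := fun i hi => by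
    simp only [hγ, Finset.mem_filter, Finset.mem_univ, true_and] at hi
    rw [hη_lim i (Or.inl hi.1.ne'), hi.2, fbWeight_zero_right]
  have hη_out : ∀ i, i ∉ γ → i ∉ β → η i = 0 := fun i hiγ hiβ => by
    obtain ⟨hy, hz, hyz⟩ :=
      complementarity_of_tendsto (hFB' · i) hεk' (hyIi i) (hzIi i) hεk0
    subst hβ hγ
    rcases complementary_cases hy hz hyz with h | h | ⟨hy0, hz0⟩
    · simp [h] at hiβ
    · simp [h] at hiγ
    · rw [hη_lim i (Or.inr hz0.ne'), hy0, fbWeight_zero_left hz0]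
  have hres : stationarityResidual gf Hc Jc A x yI η l = 0 :=
    tendsto_nhds_unique (tendsto_stationarityResidual A hgf_cont hHc_cont hJc_cont
        (hx.comp hφ.tendsto_atTop) (hyI.comp hφ.tendsto_atTop) hwφ (hl.comp hφ.tendsto_atTop))
      (tendsto_const_nhds.congr fun m => (hstat (φ m)).symm)
  have hγβ : Disjoint γ β := by
    rw [hγ, hβ, Finset.disjoint_filter]
    exact fun i _ h h' => h.1.ne' h'.1
  refine ⟨η, fun i _ => ⟨hη.1 i, hη.2 i⟩, ?_⟩
  rwa [sub_sub, ← Finset.sum_smul_eq_sum_add_sum_smul hγβ hη_γ hη_out]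

/-- any limit of stationary points (with multipliers) of the smoothed
problems `P_{εₖ}` as `εₖ ↓ 0` is an L-stationary pair. -/
theorem smoothing_method_converges_to_L_stationary
    {n q p : ℕ} (A : Matrix (Fin q) (Fin n) ℝ) (b : Fin q → ℝ)
    (c : (Fin n → ℝ) → (Fin p → ℝ)) (hc : ContDiff ℝ 2 c)
    (f : (Fin n → ℝ) → ℝ) (hf : ContDiff ℝ 1 f)
    -- `gf x` is the gradient of `f` at `x`
    (gf : (Fin n → ℝ) → (Fin n → ℝ))
    (hgf : ∀ x v, fderiv ℝ f x v = gf x ⬝ᵥ v)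
    -- `Jc x` is the Jacobian of `c` at `x` (row `i` is the gradient of `c_i`)
    (Jc : (Fin n → ℝ) → Matrix (Fin p) (Fin n) ℝ)
    (hJc : ∀ x v, fderiv ℝ c x v = Jc x *ᵥ v)
    -- `Hc j x` is the Hessian of `c_j` at `x`
    (Hc : Fin p → (Fin n → ℝ) → Matrix (Fin n) (Fin n) ℝ)
    (hHc : ∀ j x u, fderiv ℝ (fun y => Jc y j) x u = Hc j x *ᵥ u)
    (εk : ℕ → ℝ) (hεk : ∀ k, 0 < εk k) (hεk0 : Tendsto εk atTop (𝓝 0))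
    (xk : ℕ → (Fin n → ℝ)) (yEk : ℕ → (Fin q → ℝ)) (yIk : ℕ → (Fin p → ℝ))
    (zIk : ℕ → (Fin p → ℝ)) (lk : ℕ → (Fin n → ℝ))
    -- feasibility for the smoothed problem: `G = 0`
    (hG1 : ∀ k, Aᵀ *ᵥ yEk k + (Jc (xk k))ᵀ *ᵥ yIk k = 0)
    (hG2 : ∀ k, A *ᵥ xk k - b + yEk k = 0)
    (hG3 : ∀ k, c (xk k) + yIk k - zIk k = 0)
    -- smoothed Fischer–Burmeister equations
    (hFB : ∀ k i, yIk k i + zIk k i -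
        Real.sqrt (yIk k i ^ 2 + zIk k i ^ 2 + 2 * εk k ^ 2) = 0)
    -- stationarity of the smoothed problem with multiplier `lk k`
    (hstat : ∀ k, gf (xk k) + ((∑ j : Fin p, yIk k j • Hc j (xk k)) - Aᵀ * A -
        ∑ i : Fin p, (1 - zIk k i /
            Real.sqrt (yIk k i ^ 2 + zIk k i ^ 2 + 2 * εk k ^ 2)) •
          vecMulVec (Jc (xk k) i) (Jc (xk k) i)) *ᵥ lk k = 0)
    -- convergence of the whole sequence
    (x : Fin n → ℝ) (yE : Fin q → ℝ) (yI : Fin p → ℝ) (zI : Fin p → ℝ) (l : Fin n → ℝ)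
    (hx : Tendsto xk atTop (𝓝 x)) (hyE : Tendsto yEk atTop (𝓝 yE))
    (hyI : Tendsto yIk atTop (𝓝 yI)) (hzI : Tendsto zIk atTop (𝓝 zI))
    (hl : Tendsto lk atTop (𝓝 l))
    (β γ : Finset (Fin p))
    (hβ : β = Finset.univ.filter (fun i => yI i = 0 ∧ zI i = 0))
    (hγ : γ = Finset.univ.filter (fun i => 0 < yI i ∧ zI i = 0)) :
    ∃ η : Fin p → ℝ, (∀ i ∈ β, η i ∈ Set.Icc (0 : ℝ) 1) ∧
      gf x + ((∑ j : Fin p, yI j • Hc j x) - Aᵀ * A -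
          (∑ i ∈ γ, vecMulVec (Jc x i) (Jc x i)) -
          ∑ i ∈ β, η i • vecMulVec (Jc x i) (Jc x i)) *ᵥ l = 0 :=
  smoothing_method_converges_to_L_stationary_general A c hc f hf gf hgf Jc hJc Hc hHc εk hεk hεk0 xk
    yIk zIk lk hFB hstat x yI zI l hx hyI hzI hl β γ hβ hγ
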